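/- (Extension axiom) Given a morphism of short exact sequences in 𝒞, i.e. a commutative diagram with exact rows 0 → A → B → C → 0 and 0 → A′ → B′ → C′ → 0 and vertical maps a : A → A′, b : B → B′, c : C → C′, if a and c are weak equivalences then b is a weak equivalence. -/

import Mathlib

open CategoryTheory CategoryTheory.Limits

universe v u

variable {𝒜 : Type u} [Category.{v} 𝒜] [Abelian 𝒜]

/-- `(f, g)` forms a short exact sequence `0 ⟶ X ⟶ Y ⟶ Z ⟶ 0` in the ambient
abelian category `𝒜`. -/
def IsShortExactSeq {X Y Z : 𝒜} (f : X ⟶ Y) (g : Y ⟶ Z) : Prop :=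
  ∃ w : f ≫ g = 0, (ShortComplex.mk f g w).ShortExact

/-- A class of objects is closed under isomorphisms. -/
def IsoClosed (P : 𝒜 → Prop) : Prop := ∀ ⦃X Y : 𝒜⦄, (X ≅ Y) → P X → P Y

/-- `Ext¹(X, Y) = 0` relative to the exact subcategory determined by `E`:
every short exact sequence `0 ⟶ Y ⟶ M ⟶ X ⟶ 0` in `E` splits. -/
def Ext1IsZero (E : 𝒜 → Prop) (X Y : 𝒜) : Prop :=
  ∀ ⦃M : 𝒜⦄ (f : Y ⟶ M) (g : M ⟶ X), E M → IsShortExactSeq f g →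
    ∃ r : M ⟶ Y, f ≫ r = 𝟙 Y

/-- `(C, I)` is a cotorsion pair in the exact subcategory of `𝒜` determined by
the class of objects `E`: the two classes are each other's orthogonal
complement with respect to `Ext¹`. -/
structure IsCotorsionPair (E C I : 𝒜 → Prop) : Prop where
  right_eq : ∀ Y, I Y ↔ (E Y ∧ ∀ ⦃X⦄, C X → Ext1IsZero E X Y)
  left_eq : ∀ X, C X ↔ (E X ∧ ∀ ⦃Y⦄, I Y → Ext1IsZero E X Y)

/-- The cotorsion pair `(C, I)` in `E` is complete: every object of `E` admits
both kinds of approximation sequences. -/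
def IsCompleteCP (E C I : 𝒜 → Prop) : Prop :=
  (∀ A, E A → ∃ (Y P : 𝒜) (f : A ⟶ Y) (g : Y ⟶ P),
      I Y ∧ C P ∧ IsShortExactSeq f g) ∧
  (∀ A, E A → ∃ (Y P : 𝒜) (f : Y ⟶ P) (g : P ⟶ A),
      I Y ∧ C P ∧ IsShortExactSeq f g)

/-- The cotorsion pair is hereditary: `C` is closed under kernels of
admissible epimorphisms in `E`. -/
def IsHereditaryCP (E C : 𝒜 → Prop) : Prop :=
  ∀ ⦃X Y Z : 𝒜⦄ (f : X ⟶ Y) (g : Y ⟶ Z),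
    IsShortExactSeq f g → E X → C Y → C Z → C X

/-- A cofibration: an admissible monomorphism between objects of `C` whose
cokernel lies in `C`. -/
def IsCofib (C : 𝒜 → Prop) {X Y : 𝒜} (f : X ⟶ Y) : Prop :=
  C X ∧ C Y ∧ ∃ (W : 𝒜) (g : Y ⟶ W), C W ∧ IsShortExactSeq f g

/-- An acyclic fibration: an admissible epimorphism in `E` whose kernel lies
in `I`. -/
def IsAcyclicFib (E I : 𝒜 → Prop) {Y Z : 𝒜} (g : Y ⟶ Z) : Prop :=
  E Y ∧ E Z ∧ ∃ (K : 𝒜) (k : K ⟶ Y), I K ∧ IsShortExactSeq k g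

/-- An acyclic cofibration: an admissible monomorphism between objects of `C`
whose cokernel lies in `C ∩ Z`. -/
def IsAcyclicCofib (C Zc : 𝒜 → Prop) {X Y : 𝒜} (f : X ⟶ Y) : Prop :=
  C X ∧ C Y ∧ ∃ (W : 𝒜) (g : Y ⟶ W), C W ∧ Zc W ∧ IsShortExactSeq f g

/-- A weak equivalence: a morphism between objects of `C` that factors as an
acyclic cofibration followed by an acyclic fibration. -/
def IsWeakEquiv (E C I Zc : 𝒜 → Prop) {X Y : 𝒜} (f : X ⟶ Y) : Prop :=
  C X ∧ C Y ∧ ∃ (M : 𝒜) (i : X ⟶ M) (p : M ⟶ Y),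
    IsAcyclicCofib C Zc i ∧ IsAcyclicFib E I p ∧ i ≫ p = f

/-- The standing setup: a complete hereditary cotorsion pair `(Cc, Ip)` in the
exact subcategory of `𝒜` determined by the isomorphism-closed,
extension-closed class `E`, together with an isomorphism-closed class
`Zc ⊆ E` with `Ip ⊆ Zc`, such that `Zc ∩ Cc` is closed under extensions and
under cokernels of admissible monomorphisms in `Cc`. -/
structure CotorsionSetup (E Cc Ip Zc : 𝒜 → Prop) : Prop where
  isoE : IsoClosed E
  isoC : IsoClosed Cc
  isoI : IsoClosed Ip
  isoZ : IsoClosed Zc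
  extClosedE : ∀ ⦃X Y Z : 𝒜⦄ (f : X ⟶ Y) (g : Y ⟶ Z),
    IsShortExactSeq f g → E X → E Z → E Y
  cp : IsCotorsionPair E Cc Ip
  complete : IsCompleteCP E Cc Ip
  hereditary : IsHereditaryCP E Cc
  zSubE : ∀ ⦃X⦄, Zc X → E X
  iSubZ : ∀ ⦃X⦄, Ip X → Zc X
  zcExtClosed : ∀ ⦃X Y Z : 𝒜⦄ (f : X ⟶ Y) (g : Y ⟶ Z), IsShortExactSeq f g →
    Cc X → Cc Y → Cc Z → Zc X → Zc Z → Zc Y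
  zcCokerClosed : ∀ ⦃X Y Z : 𝒜⦄ (f : X ⟶ Y) (g : Y ⟶ Z), IsShortExactSeq f g →
    Cc X → Cc Y → Cc Z → Zc X → Zc Y → Zc Z

/-!
Write `a = iₐ ≫ pₐ` and `c = i_c ≫ p_c` with `i` acyclic cofibrations and `p` acyclic fibrations.
Then `b` factors through the pushout `Q` of `f` along `a`, and both factors `B ⟶ Q ⟶ B'` are
morphisms of short exact sequences with an identity as third, resp. first, component. The first
is the cobase change of `iₐ` followed by a map with kernel `ker pₐ`, the second a map with
cokernel `coker i_c` followed by the base change of `p_c`; so both are weak equivalences.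
Weak equivalences compose: an acyclic fibration followed by an acyclic cofibration can be
rewritten the other way round, and by completeness an admissible epimorphism with kernel in
`Cc ∩ Zc` is an acyclic cofibration followed by an acyclic fibration.
-/

attribute [local simp] pullback.lift_fst pullback.lift_fst_assoc pullback.lift_snd
  pullback.lift_snd_assoc pushout.inl_desc pushout.inl_desc_assoc pushout.inr_desc
  pushout.inr_desc_assoc

namespace IsShortExactSeq

variable {A B C : 𝒜} {f : A ⟶ B} {g : B ⟶ C}

lemma w (h : IsShortExactSeq f g) : f ≫ g = 0 := h.1

lemma shortExact (h : IsShortExactSeq f g) : (ShortComplex.mk f g h.w).ShortExact := h.2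

lemma mono (h : IsShortExactSeq f g) : Mono f := h.shortExact.mono_f

lemma epi (h : IsShortExactSeq f g) : Epi g := h.shortExact.epi_g

lemma exact_up_to_refinements (h : IsShortExactSeq f g) {T : 𝒜} (x : T ⟶ B)
    (hx : x ≫ g = 0) : ∃ (T' : 𝒜) (π : T' ⟶ T) (_ : Epi π) (y : T' ⟶ A), π ≫ x = y ≫ f :=
  h.shortExact.exact.exact_up_to_refinements x hx

lemma of_exact_up_to_refinements (w : f ≫ g = 0) (hf : Mono f) (hg : Epi g)
    (hex : ∀ {T : 𝒜} (x : T ⟶ B), x ≫ g = 0 →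
      ∃ (T' : 𝒜) (π : T' ⟶ T) (_ : Epi π) (y : T' ⟶ A), π ≫ x = y ≫ f) :
    IsShortExactSeq f g :=
  ⟨w, .mk' ((ShortComplex.exact_iff_exact_up_to_refinements _).2 fun _ x hx => hex x hx) hf hg⟩

lemma exists_lift (h : IsShortExactSeq f g) {T : 𝒜} (x : T ⟶ B) (hx : x ≫ g = 0) :
    ∃ y : T ⟶ A, y ≫ f = x :=
  have := h.mono
  ⟨_, h.shortExact.exact.lift_f x hx⟩

lemma exists_desc (h : IsShortExactSeq f g) {T : 𝒜} (x : B ⟶ T) (hx : f ≫ x = 0) :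
    ∃ y : C ⟶ T, g ≫ y = x :=
  have := h.epi
  ⟨_, h.shortExact.exact.g_desc x hx⟩

lemma cokernel_π (hf : Mono f) : IsShortExactSeq f (cokernel.π f) :=
  ⟨cokernel.condition f,
    .mk' (ShortComplex.exact_of_g_is_cokernel _ (cokernelIsCokernel f)) hf inferInstance⟩

lemma kernel_ι (hg : Epi g) : IsShortExactSeq (kernel.ι g) g :=
  ⟨kernel.condition g,
    .mk' (ShortComplex.exact_of_f_is_kernel _ (kernelIsKernel g)) inferInstance hg⟩

lemma of_isPushout {I X : 𝒜} {k : A ⟶ B} {p : B ⟶ C} (h : IsShortExactSeq k p)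
    {u : A ⟶ I} {r : B ⟶ X} {b : I ⟶ X} (sq : IsPushout k u r b) {q : X ⟶ C}
    (hr : r ≫ q = p) (hb : b ≫ q = 0) : IsShortExactSeq b q := by
  refine of_exact_up_to_refinements hb
    ((MorphismProperty.monomorphisms 𝒜).of_isPushout sq.flip h.mono)
    (have := h.epi; epi_of_epi_fac hr) fun x hx => ?_
  obtain ⟨T₁, π₁, _, x₂, x₃, hx₁⟩ := sq.hom_eq_add_up_to_refinements x
  have hx₂ : x₂ ≫ p = 0 := by simpa [← hr, hb, hx] using (hx₁ =≫ q).symm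
  obtain ⟨T₂, π₂, _, y, hy⟩ := h.exact_up_to_refinements x₂ hx₂
  refine ⟨T₂, π₂ ≫ π₁, epi_comp _ _, y ≫ u + π₂ ≫ x₃, ?_⟩
  simp only [Category.assoc, hx₁, Preadditive.comp_add, Preadditive.add_comp,
    reassoc_of% hy, sq.w]

lemma of_isPullback {K D P : 𝒜} {k : K ⟶ B} {p : B ⟶ C} (h : IsShortExactSeq k p)
    {t : D ⟶ C} {fst : P ⟶ B} {snd : P ⟶ D} (sq : IsPullback fst snd p t) {j : K ⟶ P}
    (hj : j ≫ fst = k) (hj' : j ≫ snd = 0) : IsShortExactSeq j snd := by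
  refine of_exact_up_to_refinements hj' (have := h.mono; mono_of_mono_fac hj)
    ((MorphismProperty.epimorphisms 𝒜).of_isPullback sq h.epi) fun x hx => ?_
  obtain ⟨T', π, _, y, hy⟩ := h.exact_up_to_refinements (x ≫ fst)
    (by rw [Category.assoc, sq.w, reassoc_of% hx, zero_comp])
  exact ⟨T', π, inferInstance, y, sq.hom_ext (by simp [hy, hj]) (by simp [hx, hj'])⟩

lemma biprod_inr_fst (M I : 𝒜) : IsShortExactSeq (biprod.inr : I ⟶ M ⊞ I) biprod.fst :=
  of_exact_up_to_refinements biprod.inr_fst inferInstance inferInstance fun x hx =>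
    ⟨_, 𝟙 _, inferInstance, x ≫ biprod.snd, by ext <;> simp [hx]⟩

lemma biprod_lift_desc_pushout {N M I : 𝒜} (h : N ⟶ M) {ι : N ⟶ I} (hι : Mono ι) :
    IsShortExactSeq (biprod.lift h (-ι)) (biprod.desc (pushout.inl h ι) (pushout.inr h ι)) :=
  have hc := Abelian.BiproductToPushoutIsCokernel.isColimitBiproductToPushout h ι
  ⟨by simp [pushout.condition], .mk' (ShortComplex.exact_of_g_is_cokernel _ hc)
    (mono_of_mono_fac (biprod.lift_snd _ _)) (epi_of_isColimit_cofork hc)⟩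

/-! Snake lemma for a morphism of short exact sequences one of whose outer components is an
identity: the other two components have the same kernel and the same cokernel. -/

variable {A' B' C' K W : 𝒜}

section IdRight

variable {f : A ⟶ B} {g : B ⟶ C} {f' : A' ⟶ B'} {g' : B' ⟶ C} {α : A ⟶ A'} {β : B ⟶ B'}

lemma kernel_mid_of_left (hr : IsShortExactSeq f g) (hr' : IsShortExactSeq f' g')
    {k : K ⟶ A} (hk : IsShortExactSeq k α) (c1 : f ≫ β = α ≫ f') (c2 : β ≫ g' = g) :
    IsShortExactSeq (k ≫ f) β := by
  have := hr.mono; have := hr.epi; have := hr'.mono; have := hk.mono; have := hk.epi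
  refine of_exact_up_to_refinements (by rw [Category.assoc, c1, reassoc_of% hk.w, zero_comp])
    inferInstance ?_ fun x hx => ?_
  · rw [epi_iff_surjective_up_to_refinements]
    intro T b'
    obtain ⟨T₁, π₁, _, x, hx⟩ := surjective_up_to_refinements_of_epi g (b' ≫ g')
    obtain ⟨T₂, π₂, _, a', ha'⟩ := hr'.exact_up_to_refinements (π₁ ≫ b' - x ≫ β)
      (by rw [Preadditive.sub_comp, Category.assoc, Category.assoc, c2, hx, sub_self])
    obtain ⟨T₃, π₃, _, a, ha⟩ := surjective_up_to_refinements_of_epi α a'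
    refine ⟨T₃, π₃ ≫ π₂ ≫ π₁, epi_comp _ _, π₃ ≫ π₂ ≫ x + a ≫ f, ?_⟩
    simp only [Preadditive.add_comp, Category.assoc, c1, ← reassoc_of% ha, ← ha',
      Preadditive.comp_sub]
    abel
  · have hxg : x ≫ g = 0 := by rw [← c2, reassoc_of% hx, zero_comp]
    obtain ⟨T₁, π₁, _, a, ha⟩ := hr.exact_up_to_refinements x hxg
    have haα : a ≫ α = 0 := zero_of_comp_mono f' (by
      rw [Category.assoc, ← c1, ← reassoc_of% ha, hx, comp_zero])
    obtain ⟨T₂, π₂, _, z, hz⟩ := hk.exact_up_to_refinements a haα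
    exact ⟨T₂, π₂ ≫ π₁, epi_comp _ _, z, by rw [Category.assoc, ha, reassoc_of% hz]⟩

lemma kernel_left_of_mid (hr : IsShortExactSeq f g) (hr' : IsShortExactSeq f' g')
    {k : K ⟶ B} (hk : IsShortExactSeq k β) (c1 : f ≫ β = α ≫ f') (c2 : β ≫ g' = g)
    {κ : K ⟶ A} (c3 : κ ≫ f = k) : IsShortExactSeq κ α := by
  have := hr.mono; have := hr'.mono; have := hk.mono; have := hk.epi
  refine of_exact_up_to_refinements (zero_of_comp_mono f' (by
      rw [Category.assoc, ← c1, reassoc_of% c3, hk.w])) (mono_of_mono_fac c3) ?_ fun x hx => ?_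
  · rw [epi_iff_surjective_up_to_refinements]
    intro T a'
    obtain ⟨T₁, π₁, _, b, hb⟩ := surjective_up_to_refinements_of_epi β (a' ≫ f')
    obtain ⟨T₂, π₂, _, a, ha⟩ := hr.exact_up_to_refinements b
      (by rw [← c2, ← reassoc_of% hb, hr'.w, comp_zero, comp_zero])
    refine ⟨T₂, π₂ ≫ π₁, epi_comp _ _, a, (cancel_mono f').1 ?_⟩
    simp only [Category.assoc, hb, reassoc_of% ha, c1]
  · obtain ⟨T₁, π₁, _, z, hz⟩ := hk.exact_up_to_refinements (x ≫ f)
      (by rw [Category.assoc, c1, reassoc_of% hx, zero_comp])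
    exact ⟨T₁, π₁, inferInstance, z,
      (cancel_mono f).1 (by rw [Category.assoc, hz, Category.assoc, c3])⟩

lemma cokernel_mid_of_left (hr : IsShortExactSeq f g) (hr' : IsShortExactSeq f' g')
    {w : A' ⟶ W} (hα : IsShortExactSeq α w) (c1 : f ≫ β = α ≫ f') (c2 : β ≫ g' = g)
    {θ : B' ⟶ W} (c3 : f' ≫ θ = w) (c4 : β ≫ θ = 0) : IsShortExactSeq β θ := by
  have := hr'.mono; have := hα.mono; have := hα.epi
  refine of_exact_up_to_refinements c4 ?_ (epi_of_epi_fac c3) fun x hx => ?_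
  · refine Preadditive.mono_of_cancel_zero _ fun x hx => ?_
    obtain ⟨T₁, π₁, _, y, hy⟩ := hr.exact_up_to_refinements x
      (by rw [← c2, reassoc_of% hx, zero_comp])
    have hy0 : y = 0 := zero_of_comp_mono α (zero_of_comp_mono f' (by
      rw [Category.assoc, ← c1, ← reassoc_of% hy, hx, comp_zero]))
    exact zero_of_epi_comp π₁ (by rw [hy, hy0, zero_comp])
  · have := hr.epi
    obtain ⟨T₁, π₁, _, b, hb⟩ := surjective_up_to_refinements_of_epi g (x ≫ g')
    obtain ⟨T₂, π₂, _, a', ha'⟩ := hr'.exact_up_to_refinements (π₁ ≫ x - b ≫ β)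
      (by rw [Preadditive.sub_comp, Category.assoc, Category.assoc, c2, hb, sub_self])
    obtain ⟨T₃, π₃, _, z, hz⟩ := hα.exact_up_to_refinements a'
      (by simp [← c3, ← reassoc_of% ha', hx, c4])
    refine ⟨T₃, π₃ ≫ π₂ ≫ π₁, epi_comp _ _, z ≫ f + π₃ ≫ π₂ ≫ b, ?_⟩
    simp only [Preadditive.add_comp, Category.assoc, c1, ← reassoc_of% hz, ← ha',
      Preadditive.comp_sub]
    abel

end IdRight

section IdLeft

variable {f : A ⟶ B} {g : B ⟶ C} {f' : A ⟶ B'} {g' : B' ⟶ C'} {β : B ⟶ B'} {γ : C ⟶ C'}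

lemma kernel_right_of_mid (hr : IsShortExactSeq f g) (hr' : IsShortExactSeq f' g')
    {k : K ⟶ B} (hk : IsShortExactSeq k β) (c1 : f ≫ β = f') (c2 : β ≫ g' = g ≫ γ) :
    IsShortExactSeq (k ≫ g) γ := by
  have := hr.epi; have := hr'.mono; have := hr'.epi; have := hk.mono; have := hk.epi
  refine of_exact_up_to_refinements (by rw [Category.assoc, ← c2, reassoc_of% hk.w, zero_comp])
    ?_ ?_ fun x hx => ?_
  · refine Preadditive.mono_of_cancel_zero _ fun x hx => ?_
    obtain ⟨T₁, π₁, _, y, hy⟩ := hr.exact_up_to_refinements (x ≫ k) (by rwa [Category.assoc])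
    have hy0 : y = 0 := zero_of_comp_mono f' (by
      rw [← c1, ← reassoc_of% hy, hk.w, comp_zero, comp_zero])
    exact zero_of_epi_comp π₁ (zero_of_comp_mono k (by rw [Category.assoc, hy, hy0, zero_comp]))
  · rw [epi_iff_surjective_up_to_refinements]
    intro T c'
    obtain ⟨T₁, π₁, _, b', hb'⟩ := surjective_up_to_refinements_of_epi g' c'
    obtain ⟨T₂, π₂, _, b, hb⟩ := surjective_up_to_refinements_of_epi β b'
    exact ⟨T₂, π₂ ≫ π₁, epi_comp _ _, b ≫ g, by
      rw [Category.assoc, Category.assoc, hb', reassoc_of% hb, c2]⟩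
  · obtain ⟨T₁, π₁, _, b, hb⟩ := surjective_up_to_refinements_of_epi g x
    obtain ⟨T₂, π₂, _, a, ha⟩ := hr'.exact_up_to_refinements (b ≫ β)
      (by rw [Category.assoc, c2, ← reassoc_of% hb, hx, comp_zero])
    obtain ⟨T₃, π₃, _, z, hz⟩ := hk.exact_up_to_refinements (π₂ ≫ b - a ≫ f)
      (by rw [Preadditive.sub_comp, Category.assoc, Category.assoc, c1, ha, sub_self])
    refine ⟨T₃, π₃ ≫ π₂ ≫ π₁, epi_comp _ _, z, ?_⟩
    rw [Category.assoc, ← reassoc_of% hz]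
    simp [hb, hr.w]

lemma cokernel_mid_of_right (hr : IsShortExactSeq f g) (hr' : IsShortExactSeq f' g')
    {w : C' ⟶ W} (hγ : IsShortExactSeq γ w) (c1 : f ≫ β = f') (c2 : β ≫ g' = g ≫ γ) :
    IsShortExactSeq β (g' ≫ w) := by
  have := hr.epi; have := hr'.mono; have := hr'.epi; have := hγ.mono; have := hγ.epi
  refine of_exact_up_to_refinements (by rw [reassoc_of% c2, hγ.w, comp_zero]) ?_
    (epi_comp _ _) fun x hx => ?_
  · refine Preadditive.mono_of_cancel_zero _ fun x hx => ?_
    obtain ⟨T₁, π₁, _, y, hy⟩ := hr.exact_up_to_refinements x (zero_of_comp_mono γ (by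
      rw [Category.assoc, ← c2, reassoc_of% hx, zero_comp]))
    have hy0 : y = 0 := zero_of_comp_mono f' (by rw [← c1, ← reassoc_of% hy, hx, comp_zero])
    exact zero_of_epi_comp π₁ (by rw [hy, hy0, zero_comp])
  · obtain ⟨T₁, π₁, _, c, hc⟩ := hγ.exact_up_to_refinements (x ≫ g') (by rwa [Category.assoc])
    obtain ⟨T₂, π₂, _, b, hb⟩ := surjective_up_to_refinements_of_epi g c
    obtain ⟨T₃, π₃, _, a, ha⟩ := hr'.exact_up_to_refinements (π₂ ≫ π₁ ≫ x - b ≫ β)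
      (by rw [Preadditive.sub_comp, Category.assoc, Category.assoc, Category.assoc, c2, hc,
        reassoc_of% hb, sub_self])
    refine ⟨T₃, π₃ ≫ π₂ ≫ π₁, epi_comp _ _, a ≫ f + π₃ ≫ b, ?_⟩
    simp only [Preadditive.add_comp, Category.assoc, c1, ← ha, Preadditive.comp_sub]
    abel

lemma cokernel_right_of_mid (hr : IsShortExactSeq f g) (hr' : IsShortExactSeq f' g')
    {w : B' ⟶ W} (hβ : IsShortExactSeq β w) (c1 : f ≫ β = f') (c2 : β ≫ g' = g ≫ γ)
    {θ : C' ⟶ W} (c3 : g' ≫ θ = w) : IsShortExactSeq γ θ := by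
  have := hr.epi; have := hr'.epi; have := hβ.mono; have := hβ.epi
  refine of_exact_up_to_refinements (zero_of_epi_comp g (by
      rw [← reassoc_of% c2, c3, hβ.w])) ?_ (epi_of_epi_fac c3) fun x hx => ?_
  · refine Preadditive.mono_of_cancel_zero _ fun x hx => ?_
    obtain ⟨T₁, π₁, _, b, hb⟩ := surjective_up_to_refinements_of_epi g x
    obtain ⟨T₂, π₂, _, a, ha⟩ := hr'.exact_up_to_refinements (b ≫ β)
      (by rw [Category.assoc, c2, ← reassoc_of% hb, hx, comp_zero])
    have hab : π₂ ≫ b = a ≫ f := by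
      rw [← sub_eq_zero]
      exact zero_of_comp_mono β
        (by simp only [Preadditive.sub_comp, Category.assoc, c1, ha, sub_self])
    exact zero_of_epi_comp (π₂ ≫ π₁) (by rw [Category.assoc, hb, reassoc_of% hab, hr.w, comp_zero])
  · obtain ⟨T₁, π₁, _, b', hb'⟩ := surjective_up_to_refinements_of_epi g' x
    obtain ⟨T₂, π₂, _, b, hb⟩ := hβ.exact_up_to_refinements b'
      (by rw [← c3, ← reassoc_of% hb', hx, comp_zero])
    exact ⟨T₂, π₂ ≫ π₁, epi_comp _ _, b ≫ g, by
      rw [Category.assoc, Category.assoc, hb', reassoc_of% hb, c2]⟩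

end IdLeft

end IsShortExactSeq

namespace CotorsionSetup

variable {E Cc Ip Zc : 𝒜 → Prop}

lemma E_of_Cc (S : CotorsionSetup E Cc Ip Zc) {X : 𝒜} (hX : Cc X) : E X := ((S.cp.left_eq X).1 hX).1

lemma E_of_Ip (S : CotorsionSetup E Cc Ip Zc) {X : 𝒜} (hX : Ip X) : E X :=
  ((S.cp.right_eq X).1 hX).1

lemma ext1IsZero (S : CotorsionSetup E Cc Ip Zc) {X Y : 𝒜} (hX : Cc X) (hY : Ip Y) :
    Ext1IsZero E X Y :=
  ((S.cp.left_eq X).1 hX).2 hY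

lemma exists_kernel_of_isAcyclicFib (S : CotorsionSetup E Cc Ip Zc) {Y Z : 𝒜} {p : Y ⟶ Z}
    (hp : IsAcyclicFib E Ip p) (hY : Cc Y) (hZ : Cc Z) :
    ∃ (K : 𝒜) (k : K ⟶ Y), Cc K ∧ Ip K ∧ IsShortExactSeq k p :=
  let ⟨_, _, K, k, hK, hk⟩ := hp
  ⟨K, k, S.hereditary k p hk (S.E_of_Ip hK) hY hZ, hK, hk⟩

/-- To split `0 ⟶ Y ⟶ M ⟶ X ⟶ 0`, first split its pullback along `X₁ ⟶ X`, which gives a lift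
`σ : X₁ ⟶ M`; dividing out by `σ` leaves an extension of `X₂` by `Y`, which splits too. -/
lemma Cc_of_shortExact (S : CotorsionSetup E Cc Ip Zc) {X₁ X X₂ : 𝒜} {m : X₁ ⟶ X} {e : X ⟶ X₂}
    (hs : IsShortExactSeq m e) (h₁ : Cc X₁) (h₂ : Cc X₂) : Cc X := by
  refine (S.cp.left_eq X).2 ⟨S.extClosedE m e hs (S.E_of_Cc h₁) (S.E_of_Cc h₂),
    fun Y hY M f g _ hfg => ?_⟩
  have := hs.mono
  have hP : IsShortExactSeq (pullback.lift 0 f (by simp [hfg.w])) (pullback.fst m g) :=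
    hfg.of_isPullback (IsPullback.of_hasPullback m g).flip (pullback.lift_snd _ _ _)
      (pullback.lift_fst _ _ _)
  obtain ⟨r₁, hr₁⟩ := S.ext1IsZero h₁ hY _ _
    (S.extClosedE _ _ hP (S.E_of_Ip hY) (S.E_of_Cc h₁)) hP
  have spl := ShortComplex.Splitting.ofExactOfRetraction _ hP.shortExact.exact r₁ hr₁ hP.epi
  obtain ⟨σ, hσ⟩ : ∃ σ : X₁ ⟶ M, σ ≫ g = m :=
    ⟨spl.s ≫ pullback.snd m g, by rw [Category.assoc, ← pullback.condition, spl.s_g_assoc]⟩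
  have hσc := IsShortExactSeq.cokernel_π (mono_of_mono_fac hσ)
  obtain ⟨gbar, hgbar⟩ := hσc.exists_desc (g ≫ e) (by rw [← Category.assoc, hσ, hs.w])
  have hQ := hσc.kernel_right_of_mid hs hfg hσ hgbar.symm
  obtain ⟨r₂, hr₂⟩ := S.ext1IsZero h₂ hY _ _
    (S.extClosedE _ _ hQ (S.E_of_Ip hY) (S.E_of_Cc h₂)) hQ
  exact ⟨cokernel.π _ ≫ r₂, by rwa [← Category.assoc]⟩

lemma isAcyclicCofib_comp (S : CotorsionSetup E Cc Ip Zc) {X M N : 𝒜} {i : X ⟶ M} {j : M ⟶ N}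
    (hi : IsAcyclicCofib Cc Zc i) (hj : IsAcyclicCofib Cc Zc j) : IsAcyclicCofib Cc Zc (i ≫ j) := by
  obtain ⟨hX, -, W₁, w₁, hW₁, hW₁z, h₁⟩ := hi
  obtain ⟨-, hN, W₂, w₂, hW₂, hW₂z, h₂⟩ := hj
  have := h₁.mono; have := h₂.mono
  have hij := IsShortExactSeq.cokernel_π (mono_comp i j)
  obtain ⟨γ, hγ⟩ := h₁.exists_desc (j ≫ cokernel.π (i ≫ j))
    (by rw [← Category.assoc, cokernel.condition])
  obtain ⟨θ, hθ⟩ := hij.exists_desc w₂ (by rw [Category.assoc, h₂.w, comp_zero])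
  have hγθ : IsShortExactSeq γ θ := h₁.cokernel_right_of_mid hij h₂ rfl hγ.symm hθ
  have hV : Cc (cokernel (i ≫ j)) := S.Cc_of_shortExact hγθ hW₁ hW₂
  exact ⟨hX, hN, _, _, hV, S.zcExtClosed γ θ hγθ hW₁ hV hW₂ hW₁z hW₂z, hij⟩

lemma exists_kernel_comp (S : CotorsionSetup E Cc Ip Zc) {N Y Z K₁ K₂ : 𝒜} {q : N ⟶ Y}
    {p : Y ⟶ Z} {k₁ : K₁ ⟶ N} {k₂ : K₂ ⟶ Y} (h₁ : IsShortExactSeq k₁ q)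
    (h₂ : IsShortExactSeq k₂ p) (hK₁ : Cc K₁) (hK₁z : Zc K₁) (hK₂ : Cc K₂) (hK₂z : Zc K₂) :
    ∃ (T : 𝒜) (t : T ⟶ N), Cc T ∧ Zc T ∧ IsShortExactSeq t (q ≫ p) := by
  have := h₁.epi; have := h₂.epi
  have hqp := IsShortExactSeq.kernel_ι (epi_comp q p)
  obtain ⟨τ, hτ⟩ := h₂.exists_lift (kernel.ι (q ≫ p) ≫ q) (by simp)
  obtain ⟨κ, hκ⟩ := hqp.exists_lift k₁ (by rw [← Category.assoc, h₁.w, zero_comp])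
  have hκτ : IsShortExactSeq κ τ := hqp.kernel_left_of_mid h₂ h₁ hτ.symm rfl hκ
  have hT : Cc (kernel (q ≫ p)) := S.Cc_of_shortExact hκτ hK₁ hK₂
  exact ⟨_, _, hT, S.zcExtClosed κ τ hκτ hK₁ hT hK₂ hK₁z hK₂z, hqp⟩

/-- Push the kernel `K` out along a special `Ip`-preenvelope `K ⟶ I`. -/
lemma exists_factorization_of_kernel (S : CotorsionSetup E Cc Ip Zc) {M Y K : 𝒜} {p : M ⟶ Y}
    {k : K ⟶ M} (hM : Cc M) (hY : E Y) (hK : Cc K) (hKz : Zc K) (hk : IsShortExactSeq k p) :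
    ∃ (N : 𝒜) (j : M ⟶ N) (q : N ⟶ Y),
      IsAcyclicCofib Cc Zc j ∧ IsAcyclicFib E Ip q ∧ j ≫ q = p := by
  obtain ⟨I, P, u, π, hI, hP, hu⟩ := S.complete.1 K (S.E_of_Cc hK)
  have hIc : Cc I := S.Cc_of_shortExact hu hK hP
  have sq := IsPushout.of_hasPushout k u
  have hinl : IsShortExactSeq (pushout.inl k u) (pushout.desc 0 π (by rw [hu.w, comp_zero])) :=
    hu.of_isPushout sq.flip (pushout.inr_desc _ _ _) (pushout.inl_desc _ _ _)
  have hinr : IsShortExactSeq (pushout.inr k u) (pushout.desc p 0 (by rw [hk.w, comp_zero])) :=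
    hk.of_isPushout sq (pushout.inl_desc _ _ _) (pushout.inr_desc _ _ _)
  have hN : Cc (pushout k u) := S.Cc_of_shortExact hinl hM hP
  exact ⟨_, _, _, ⟨hM, hN, P, _, hP, S.zcCokerClosed u π hu hK hIc hP hKz (S.iSubZ hI), hinl⟩,
    ⟨S.E_of_Cc hN, hY, I, _, hI, hinr⟩, pushout.inl_desc _ _ _⟩

lemma isWeakEquiv_comp_of_kernel (S : CotorsionSetup E Cc Ip Zc) {X M Y K : 𝒜} {i : X ⟶ M}
    {p : M ⟶ Y} {k : K ⟶ M} (hi : IsAcyclicCofib Cc Zc i) (hY : Cc Y) (hK : Cc K) (hKz : Zc K)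
    (hk : IsShortExactSeq k p) : IsWeakEquiv E Cc Ip Zc (i ≫ p) := by
  obtain ⟨N, j, q, hj, hq, rfl⟩ := S.exists_factorization_of_kernel hi.2.1 (S.E_of_Cc hY) hK hKz hk
  exact ⟨hi.1, hY, N, i ≫ j, q, S.isAcyclicCofib_comp hi hj, hq, Category.assoc _ _ _⟩

/-- The new middle object is `N ⊞ I` for a special `Ip`-preenvelope `M ⟶ I`; the cokernel of
`M ⟶ N ⊞ I` is the pushout `G` of `M ⟶ N` and `M ⟶ I`, which is an extension of `W` by
the pushout `G₁` of `M ⟶ Q` and `M ⟶ I`, itself the cokernel of a map between objects of `Ip`. -/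
lemma exists_swap (S : CotorsionSetup E Cc Ip Zc) {M Q N : 𝒜} {q : M ⟶ Q} {ψ : Q ⟶ N}
    (hq : IsAcyclicFib E Ip q) (hM : Cc M) (hQ : Cc Q) (hψ : IsAcyclicCofib Cc Zc ψ) :
    ∃ (L : 𝒜) (m : M ⟶ L) (r : L ⟶ N),
      IsAcyclicCofib Cc Zc m ∧ IsAcyclicFib E Ip r ∧ m ≫ r = q ≫ ψ := by
  obtain ⟨Iq, kq, hIqc, hIq, hkq⟩ := S.exists_kernel_of_isAcyclicFib hq hM hQ
  obtain ⟨-, hN, W, w, hW, hWz, hψw⟩ := hψ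
  obtain ⟨I, P, ι, π, hI, hP, hιπ⟩ := S.complete.1 M (S.E_of_Cc hM)
  have hIc : Cc I := S.Cc_of_shortExact hιπ hM hP
  have hG₁ : IsShortExactSeq (pushout.inl q ι) (pushout.desc 0 π (by rw [hιπ.w, comp_zero])) :=
    hιπ.of_isPushout (IsPushout.of_hasPushout _ _).flip (pushout.inr_desc _ _ _)
      (pushout.inl_desc _ _ _)
  have hG : IsShortExactSeq (pushout.inl (q ≫ ψ) ι)
      (pushout.desc 0 π (by rw [hιπ.w, comp_zero])) :=
    hιπ.of_isPushout (IsPushout.of_hasPushout _ _).flip (pushout.inr_desc _ _ _)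
      (pushout.inl_desc _ _ _)
  have hG₁c : Cc (pushout q ι) := S.Cc_of_shortExact hG₁ hQ hP
  have hGc : Cc (pushout (q ≫ ψ) ι) := S.Cc_of_shortExact hG hN hP
  have hG₁z : Zc (pushout q ι) := by
    have h := hιπ.kernel_mid_of_left hG₁ hkq pushout.condition.symm (pushout.inr_desc _ _ _)
    exact S.zcCokerClosed _ _ h hIqc hIc hG₁c (S.iSubZ hIq) (S.iSubZ hI)
  have hGz : Zc (pushout (q ≫ ψ) ι) := by
    have h := hG₁.cokernel_mid_of_left hG hψw
      (β := pushout.desc (ψ ≫ pushout.inl _ _) (pushout.inr _ _)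
        (by rw [← Category.assoc, pushout.condition]))
      (θ := pushout.desc w 0 (by simp [hψw.w]))
      (pushout.inl_desc _ _ _) (by ext <;> simp) (pushout.inl_desc _ _ _) (by ext <;> simp [hψw.w])
    exact S.zcExtClosed _ _ h hG₁c hGc hW hG₁z hWz
  have hL : Cc (N ⊞ I) := S.Cc_of_shortExact (IsShortExactSeq.biprod_inr_fst N I) hIc hN
  exact ⟨N ⊞ I, biprod.lift (q ≫ ψ) (-ι), biprod.fst,
    ⟨hM, hL, _, _, hGc, hGz, IsShortExactSeq.biprod_lift_desc_pushout _ hιπ.mono⟩,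
    ⟨S.E_of_Cc hL, S.E_of_Cc hN, I, _, hI, IsShortExactSeq.biprod_inr_fst N I⟩,
    biprod.lift_fst _ _⟩

lemma isWeakEquiv_comp (S : CotorsionSetup E Cc Ip Zc) {X Y Z : 𝒜} {φ : X ⟶ Y} {χ : Y ⟶ Z}
    (hφ : IsWeakEquiv E Cc Ip Zc φ) (hχ : IsWeakEquiv E Cc Ip Zc χ) :
    IsWeakEquiv E Cc Ip Zc (φ ≫ χ) := by
  obtain ⟨-, hY, M₁, i₁, p₁, hi₁, hp₁, rfl⟩ := hφ
  obtain ⟨-, hZ, M₂, i₂, p₂, hi₂, hp₂, rfl⟩ := hχ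
  obtain ⟨L, m, r, hm, hr, hmr⟩ := S.exists_swap hp₁ hi₁.2.1 hY hi₂
  obtain ⟨J, j, hJc, hJ, hj⟩ := S.exists_kernel_of_isAcyclicFib hr hm.2.1 hi₂.2.1
  obtain ⟨K, k, hKc, hK, hk⟩ := S.exists_kernel_of_isAcyclicFib hp₂ hi₂.2.1 hZ
  obtain ⟨T, t, hTc, hTz, ht⟩ :=
    S.exists_kernel_comp hj hk hJc (S.iSubZ hJ) hKc (S.iSubZ hK)
  convert S.isWeakEquiv_comp_of_kernel (S.isAcyclicCofib_comp hi₁ hm) hZ hTc hTz ht using 1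
  simp [reassoc_of% hmr]

section Extension

variable {A B C A' B' C' : 𝒜}

/-- Writing `a = i ≫ p`, the map `β` factors through the pushout of `f` along `i`. -/
lemma isWeakEquiv_of_map_of_id_right (S : CotorsionSetup E Cc Ip Zc) {f : A ⟶ B} {g : B ⟶ C}
    {f' : A' ⟶ B'} {g' : B' ⟶ C} (hr : IsShortExactSeq f g) (hr' : IsShortExactSeq f' g')
    (hB : Cc B) (hB' : Cc B') {a : A ⟶ A'} {β : B ⟶ B'} (c1 : f ≫ β = a ≫ f') (c2 : β ≫ g' = g)
    (ha : IsWeakEquiv E Cc Ip Zc a) : IsWeakEquiv E Cc Ip Zc β := by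
  obtain ⟨-, hA', M, i, p, ⟨-, hM, W, w, hW, hWz, hiw⟩, hp, rfl⟩ := ha
  obtain ⟨K, k, -, hK, hk⟩ := S.exists_kernel_of_isAcyclicFib hp hM hA'
  have sq := IsPushout.of_hasPushout f i
  have hinl : IsShortExactSeq (pushout.inl f i) (pushout.desc 0 w (by rw [hiw.w, comp_zero])) :=
    hiw.of_isPushout sq.flip (pushout.inr_desc _ _ _) (pushout.inl_desc _ _ _)
  have hinr : IsShortExactSeq (pushout.inr f i) (pushout.desc g 0 (by rw [hr.w, comp_zero])) :=
    hr.of_isPushout sq (pushout.inl_desc _ _ _) (pushout.inr_desc _ _ _)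
  have hP : Cc (pushout f i) := S.Cc_of_shortExact hinl hB hW
  refine ⟨hB, hB', _, pushout.inl f i, pushout.desc β (p ≫ f') (by rw [c1, Category.assoc]),
    ⟨hB, hP, W, _, hW, hWz, hinl⟩, ⟨S.E_of_Cc hP, S.E_of_Cc hB', K, k ≫ pushout.inr f i, hK, ?_⟩,
    pushout.inl_desc _ _ _⟩
  exact hinr.kernel_mid_of_left hr' hk (pushout.inr_desc _ _ _) (by ext <;> simp [c2, hr'.w])

/-- Writing `c = i ≫ p`, the map `β` factors through the pullback of `g'` along `p`. -/
lemma isWeakEquiv_of_map_of_id_left (S : CotorsionSetup E Cc Ip Zc) {f : A ⟶ B} {g : B ⟶ C}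
    {f' : A ⟶ B'} {g' : B' ⟶ C'} (hr : IsShortExactSeq f g) (hr' : IsShortExactSeq f' g')
    (hB : Cc B) (hB' : Cc B') {β : B ⟶ B'} {c : C ⟶ C'} (c1 : f ≫ β = f')
    (c2 : β ≫ g' = g ≫ c) (hc : IsWeakEquiv E Cc Ip Zc c) : IsWeakEquiv E Cc Ip Zc β := by
  obtain ⟨-, hC', M, i, p, ⟨-, hM, W, w, hW, hWz, hiw⟩, hp, rfl⟩ := hc
  obtain ⟨K, k, hKc, hK, hk⟩ := S.exists_kernel_of_isAcyclicFib hp hM hC'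
  have sq := IsPullback.of_hasPullback g' p
  have hfst : IsShortExactSeq (pullback.lift 0 k (by simp [hk.w])) (pullback.fst g' p) :=
    hk.of_isPullback sq.flip (pullback.lift_snd _ _ _) (pullback.lift_fst _ _ _)
  have hsnd : IsShortExactSeq (pullback.lift f' 0 (by simp [hr'.w])) (pullback.snd g' p) :=
    hr'.of_isPullback sq (pullback.lift_fst _ _ _) (pullback.lift_snd _ _ _)
  have hP : Cc (pullback g' p) := S.Cc_of_shortExact hfst hKc hB'
  refine ⟨hB, hB', _, pullback.lift β (g ≫ i) (by rw [c2, Category.assoc]), pullback.fst g' p,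
    ⟨hB, hP, W, pullback.snd g' p ≫ w, hW, hWz, ?_⟩, ⟨S.E_of_Cc hP, S.E_of_Cc hB', K, _, hK, hfst⟩,
    pullback.lift_fst _ _ _⟩
  exact hr.cokernel_mid_of_right hsnd hiw (by ext <;> simp [c1, reassoc_of% hr.w])
    (pullback.lift_snd _ _ _)

end Extension

end CotorsionSetup

theorem extension_axiom_general
    (E Cc Ip Zc : 𝒜 → Prop) (S : CotorsionSetup E Cc Ip Zc)
    {A B C₀ A' B' C' : 𝒜}
    (f : A ⟶ B) (g : B ⟶ C₀) (f' : A' ⟶ B') (g' : B' ⟶ C')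
    (a : A ⟶ A') (b : B ⟶ B') (c : C₀ ⟶ C')
    (hB : Cc B) (hC : Cc C₀)
    (hA' : Cc A') (hB' : Cc B')
    (hrow : IsShortExactSeq f g) (hrow' : IsShortExactSeq f' g')
    (wf : f ≫ b = a ≫ f') (wg : g ≫ c = b ≫ g')
    (ha : IsWeakEquiv E Cc Ip Zc a) (hc : IsWeakEquiv E Cc Ip Zc c) :
    IsWeakEquiv E Cc Ip Zc b := by
  have sq := IsPushout.of_hasPushout f a
  have hQ : IsShortExactSeq (pushout.inr f a) (pushout.desc g 0 (by rw [hrow.w, comp_zero])) :=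
    hrow.of_isPushout sq (pushout.inl_desc _ _ _) (pushout.inr_desc _ _ _)
  have hQc : Cc (pushout f a) := S.Cc_of_shortExact hQ hA' hC
  have h₁ : IsWeakEquiv E Cc Ip Zc (pushout.inl f a) :=
    S.isWeakEquiv_of_map_of_id_right hrow hQ hB hQc sq.w (pushout.inl_desc _ _ _) ha
  have h₂ : IsWeakEquiv E Cc Ip Zc (pushout.desc b f' wf) :=
    S.isWeakEquiv_of_map_of_id_left hQ hrow' hQc hB' (pushout.inr_desc _ _ _)
      (by ext <;> simp [wg, hrow'.w]) hc
  simpa using S.isWeakEquiv_comp h₁ h₂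

/-- **Extension axiom.** In the standing setup, given a morphism
of short exact sequences in `Cc`, i.e. a commutative diagram with exact rows
`0 → A → B → C₀ → 0` and `0 → A' → B' → C' → 0` and vertical maps
`a : A ⟶ A'`, `b : B ⟶ B'`, `c : C₀ ⟶ C'`, if `a` and `c` are weak
equivalences then so is `b`. -/
theorem extension_axiom
    (E Cc Ip Zc : 𝒜 → Prop) (S : CotorsionSetup E Cc Ip Zc)
    {A B C₀ A' B' C' : 𝒜}
    (f : A ⟶ B) (g : B ⟶ C₀) (f' : A' ⟶ B') (g' : B' ⟶ C')
    (a : A ⟶ A') (b : B ⟶ B') (c : C₀ ⟶ C')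
    (hA : Cc A) (hB : Cc B) (hC : Cc C₀)
    (hA' : Cc A') (hB' : Cc B') (hC' : Cc C')
    (hrow : IsShortExactSeq f g) (hrow' : IsShortExactSeq f' g')
    (wf : f ≫ b = a ≫ f') (wg : g ≫ c = b ≫ g')
    (ha : IsWeakEquiv E Cc Ip Zc a) (hc : IsWeakEquiv E Cc Ip Zc c) :
    IsWeakEquiv E Cc Ip Zc b :=
  extension_axiom_general E Cc Ip Zc S f g f' g' a b c hB hC hA' hB' hrow hrow' wf wg ha hc
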